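/- arXiv:1407.8433 — 3 statements merged into one kernel-verified Lean document; each statement's English description precedes it below -/
import Mathlib

section
/- In the model where N messages are each sent to an independently and uniformly chosen bin among n bins (n ≥ 1), for every natural number m ≤ N the expected number of bins receiving exactly m messages equals n · binom(N,m) · (1/n)^m · (1 − 1/n)^{N−m}. -/
open Finset

/-! Fix a bin `b`. A placement in which `b` receives exactly the messages in `s` sends each
message of `s` to `b` and each other message to one of the other `n - 1` bins, so there are
`(n - 1) ^ (N - #s)` of them; summing over the `binom(N, m)` sets `s` of size `m` and over the `n`
bins, and dividing by the `n ^ N` placements, gives the formula. -/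

section Fibers

variable {ι α : Type*} [Fintype ι] [DecidableEq ι] [Fintype α] [DecidableEq α]

lemma card_filter_fiber_eq (b : α) (s : Finset ι) :
    #{ω : ι → α | ({i | ω i = b} : Finset ι) = s}
      = (Fintype.card α - 1) ^ (Fintype.card ι - #s) := by
  have hpi : ({ω : ι → α | ({i | ω i = b} : Finset ι) = s} : Finset (ι → α))
      = Fintype.piFinset (fun i => if i ∈ s then {b} else univ.erase b) := by
    ext ω
    simp only [mem_filter, mem_univ, true_and, Fintype.mem_piFinset, Finset.ext_iff]
    refine forall_congr' fun i => ?_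
    by_cases hi : i ∈ s <;> simp [hi]
  rw [hpi, Fintype.card_piFinset, ← prod_mul_prod_compl s,
    prod_congr rfl (g := fun _ => 1) fun i hi => by simp [hi],
    prod_congr (s₂ := sᶜ) rfl (g := fun _ => Fintype.card α - 1) fun i hi => by
      simp [mem_compl.1 hi, card_erase_of_mem]]
  simp [card_compl]

lemma card_filter_card_fiber_eq (b : α) (m : ℕ) :
    #{ω : ι → α | #{i | ω i = b} = m}
      = (Fintype.card ι).choose m * (Fintype.card α - 1) ^ (Fintype.card ι - m) := by
  rw [card_eq_sum_card_fiberwise (f := fun ω : ι → α => ({i | ω i = b} : Finset ι))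
      (t := powersetCard m univ) fun ω hω => by simpa [mem_powersetCard] using hω,
    sum_congr rfl (g := fun _ => (Fintype.card α - 1) ^ (Fintype.card ι - m)) fun s hs => ?_,
    sum_const, card_powersetCard, card_univ, smul_eq_mul]
  rw [mem_powersetCard] at hs
  rw [filter_filter, ← hs.2, ← card_filter_fiber_eq b s]
  exact congrArg card <| filter_congr fun ω _ => and_iff_right_of_imp fun h => h ▸ rfl

lemma sum_card_filter_card_fiber_eq (m : ℕ) :
    ∑ ω : ι → α, #{b | #{i | ω i = b} = m} = Fintype.card α *
      ((Fintype.card ι).choose m * (Fintype.card α - 1) ^ (Fintype.card ι - m)) := by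
  simp_rw [card_filter]
  rw [sum_comm]
  simp_rw [← card_filter, card_filter_card_fiber_eq, sum_const, card_univ, smul_eq_mul]

end Fibers

lemma mul_choose_mul_div_pow_eq (n N m : ℕ) (hn : 1 ≤ n) (hm : m ≤ N) :
    (n * (N.choose m * (n - 1) ^ (N - m)) : ℕ) / (n : ℝ) ^ N
      = n * N.choose m * (1 / n : ℝ) ^ m * (1 - 1 / n : ℝ) ^ (N - m) := by
  have hn0 : (n : ℝ) ≠ 0 := by positivity
  rw [one_sub_div hn0, div_pow, div_pow, one_pow, ← Nat.sub_add_cancel hm]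
  push_cast [hn, Nat.add_sub_cancel]
  field_simp
  ring

/-- With `N` messages each sent to an independently and uniformly chosen bin
among `n ≥ 1` bins (uniform measure on `Fin N → Fin n`), for every `m ≤ N` the expected
number of bins receiving exactly `m` messages equals
`n · binom(N,m) · (1/n)^m · (1 − 1/n)^{N−m}`. -/
theorem stmt3 (n N m : ℕ) (hn : 1 ≤ n) (hm : m ≤ N) :
    (∑ ω : Fin N → Fin n,
        ((Finset.univ.filter (fun b : Fin n =>
          (Finset.univ.filter (fun i : Fin N => ω i = b)).card = m)).card : ℝ)) /
      (Fintype.card (Fin N → Fin n) : ℝ)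
    = (n : ℝ) * (N.choose m : ℝ) * (1 / (n : ℝ)) ^ m * (1 - 1 / (n : ℝ)) ^ (N - m) := by
  rw [← Nat.cast_sum, sum_card_filter_card_fiber_eq, Fintype.card_fun]
  simpa using mul_choose_mul_div_pow_eq n N m hn hm
end

section
/- For every integer L ≥ 1, define for real M > 0: p_s(M, L) = e^{−M} · Σ_{m=0}^{L−2} M^m/m! + (L/(M·e^{M})) · Σ_{m=L}^{∞} M^m/m! (the first sum being empty for L = 1). Then lim_{M→∞} (1 − p_s(M, L))^{M} = e^{−L}. -/
/-!
Since `∑_{m ≥ L} M^m/m! = e^M - ∑_{m < L} M^m/m!`, the product `M · p_s(M, L)` equals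
`M e^{-M} ∑_{m ≤ L-2} M^m/m! + L - L e^{-M} ∑_{m < L} M^m/m!`, and every term carrying a factor
`e^{-M}` is polynomial times `e^{-M}`, hence vanishes as `M → ∞`. So `M · p_s(M, L) → L`, and
`(1 - p_s)^M → e^{-L}` is the classical `(1 + g(M))^M → e^t` for `M · g(M) → t`.
-/

open Filter Finset Real Nat

noncomputable def successProb (L : ℕ) (M : ℝ) : ℝ :=
  exp (-M) * ∑ m ∈ range (L - 1), M ^ m / (m ! : ℝ)
    + ((L : ℝ) / (M * exp M)) * ∑' m : ℕ, if L ≤ m then M ^ m / (m ! : ℝ) else 0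

lemma hasSum_ite_le_pow_div_factorial (L : ℕ) (x : ℝ) :
    HasSum (fun m : ℕ => if L ≤ m then x ^ m / (m ! : ℝ) else 0)
      (exp x - ∑ m ∈ range L, x ^ m / (m ! : ℝ)) := by
  have hexp : HasSum (fun m : ℕ => x ^ m / (m ! : ℝ)) (exp x) := by
    rw [exp_eq_exp_ℝ]
    exact NormedSpace.expSeries_div_hasSum_exp x
  have hhead : HasSum (fun m : ℕ => if m < L then x ^ m / (m ! : ℝ) else 0)
      (∑ m ∈ range L, if m < L then x ^ m / (m ! : ℝ) else 0) :=
    hasSum_sum_of_ne_finset_zero fun m hm => if_neg (by simpa using hm)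
  rw [sum_ite_of_true fun m hm => mem_range.mp hm] at hhead
  have hsplit : (fun m : ℕ => if L ≤ m then x ^ m / (m ! : ℝ) else 0)
      = fun m => x ^ m / (m ! : ℝ) - if m < L then x ^ m / (m ! : ℝ) else 0 := by
    funext m
    split_ifs <;> first | omega | ring
  rw [hsplit]
  exact hexp.sub hhead

lemma tendsto_pow_mul_exp_neg_mul_sum_range (j k : ℕ) :
    Tendsto (fun x : ℝ => x ^ j * exp (-x) * ∑ m ∈ range k, x ^ m / (m ! : ℝ)) atTop (nhds 0) := by
  have hterm (m : ℕ) :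
      Tendsto (fun x : ℝ => x ^ (j + m) * exp (-x) / (m ! : ℝ)) atTop (nhds 0) := by
    simpa using (tendsto_pow_mul_exp_neg_atTop_nhds_zero (j + m)).div_const (m ! : ℝ)
  have hsum := tendsto_finsetSum (range k) fun m _ => hterm m
  rw [sum_const_zero] at hsum
  refine hsum.congr fun x => ?_
  rw [mul_sum]
  exact sum_congr rfl fun m _ => by ring

lemma mul_successProb_eq (L : ℕ) {M : ℝ} (hM : M ≠ 0) :
    M * successProb L M = M * exp (-M) * ∑ m ∈ range (L - 1), M ^ m / (m ! : ℝ)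
      + (L - L * (exp (-M) * ∑ m ∈ range L, M ^ m / (m ! : ℝ))) := by
  rw [successProb, (hasSum_ite_le_pow_div_factorial L M).tsum_eq, exp_neg]
  field_simp

lemma tendsto_mul_successProb (L : ℕ) :
    Tendsto (fun M => M * successProb L M) atTop (nhds (L : ℝ)) := by
  have hhead := tendsto_pow_mul_exp_neg_mul_sum_range 1 (L - 1)
  have htail := tendsto_pow_mul_exp_neg_mul_sum_range 0 L
  simp only [pow_one, pow_zero, one_mul] at hhead htail
  have h := hhead.add ((tendsto_const_nhds (x := (L : ℝ))).sub
    ((tendsto_const_nhds (x := (L : ℝ))).mul htail))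
  rw [mul_zero, sub_zero, zero_add] at h
  refine h.congr' ?_
  filter_upwards [eventually_ne_atTop 0] with M hM
  exact (mul_successProb_eq L hM).symm

theorem stmt9_general (L : ℕ) :
    Tendsto (fun M : ℝ =>
        (1 - (Real.exp (-M) * ∑ m ∈ Finset.range (L - 1), M ^ m / (m.factorial : ℝ)
            + ((L : ℝ) / (M * Real.exp M)) *
                ∑' m : ℕ, if L ≤ m then M ^ m / (m.factorial : ℝ) else 0)) ^ M)
      atTop (nhds (Real.exp (-(L : ℝ)))) := by
  have h := tendsto_one_add_rpow_exp_of_tendsto (g := fun M => -successProb L M)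
    (by simpa only [mul_neg] using (tendsto_mul_successProb L).neg)
  exact h.congr fun M => by rw [← sub_eq_add_neg, successProb]

/-- For every integer `L ≥ 1`, with
`p_s(M,L) = e^{−M}·Σ_{m=0}^{L−2} M^m/m! + (L/(M·e^M))·Σ_{m=L}^{∞} M^m/m!`
(first sum empty for `L = 1`), one has `lim_{M→∞} (1 − p_s(M,L))^M = e^{−L}`. -/
theorem stmt9 (L : ℕ) (hL : 1 ≤ L) :
    Tendsto (fun M : ℝ =>
        (1 - (Real.exp (-M) * ∑ m ∈ Finset.range (L - 1), M ^ m / (m.factorial : ℝ)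
            + ((L : ℝ) / (M * Real.exp M)) *
                ∑' m : ℕ, if L ≤ m then M ^ m / (m.factorial : ℝ) else 0)) ^ M)
      atTop (nhds (Real.exp (-(L : ℝ)))) :=
  stmt9_general L
end

section
/- Fix an integer L ≥ 1 and define p_i(L) for integers i ≥ 1 as follows: p_s(1, K) = e^{−1} · Σ_{j=0}^{K−2} 1/j! + (K/e) · Σ_{j=K}^{∞} 1/j! for K ≥ 1 (first sum empty for K = 1), and p_i(L) = Σ_{m=0}^{L−1} ((i−1)^m / (e^{i−1}·m!)) · p_s(1, L−m), with the convention 0⁰ = 1. Then p_i(L) < 1 for every i, p_i(L) → 0 as i → ∞, Σ_{i=1}^{∞} p_i(L) < ∞, and the infinite product ∏_{i=1}^{∞} (1 − p_i(L)) converges to a strictly positive real number. -/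
open Finset Filter

/-- `p_s(1, K) = e^{−1}·Σ_{j=0}^{K−2} 1/j! + (K/e)·Σ_{j=K}^{∞} 1/j!`
(the first sum being empty for `K = 1`). -/
noncomputable def pS1 (K : ℕ) : ℝ :=
  Real.exp (-1) * ∑ j ∈ Finset.range (K - 1), 1 / (j.factorial : ℝ)
    + ((K : ℝ) / Real.exp 1) * ∑' j : ℕ, if K ≤ j then (1 : ℝ) / (j.factorial : ℝ) else 0

/-- `p_i(L) = Σ_{m=0}^{L−1} ((i−1)^m / (e^{i−1}·m!)) · p_s(1, L−m)`, with `0⁰ = 1`. -/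
noncomputable def pRanked (L i : ℕ) : ℝ :=
  ∑ m ∈ Finset.range L,
    ((i : ℝ) - 1) ^ m / (Real.exp ((i : ℝ) - 1) * (m.factorial : ℝ)) * pS1 (L - m)

/-! The inequality `p_s(1, K) < 1` amounts to `(K - 1) · Σ_{j ≥ K} 1/j! < 1/(K-1)!`, which
follows from the Taylor remainder bound for `e`. The weights `(i-1)^m e^{-(i-1)} / m!` in
`p_i(L)` are Poisson probabilities, of total mass at most `1` and with positive mass at `m = 0`,
so `p_i(L) < 1`. For fixed `m` they are summable in `i`, hence so is `p_i(L)`; then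
`Σ log (1 - p_i(L))` converges and the product is the exponential of a finite sum. -/

open scoped Nat

lemma Real.hasSum_one_div_factorial : HasSum (fun j : ℕ => 1 / (j ! : ℝ)) (Real.exp 1) := by
  simpa [Real.exp_eq_exp_ℝ] using NormedSpace.expSeries_div_hasSum_exp (1 : ℝ)

lemma Real.hasSum_one_div_factorial_tail (K : ℕ) :
    HasSum (fun j : ℕ => if K ≤ j then 1 / (j ! : ℝ) else 0)
      (Real.exp 1 - ∑ j ∈ range K, 1 / (j ! : ℝ)) := by
  have hhead : ∑ j ∈ range K, (if K ≤ j then 1 / (j ! : ℝ) else 0) = 0 :=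
    sum_eq_zero fun j hj => if_neg (not_le.2 (mem_range.1 hj))
  rw [← hasSum_nat_add_iff' K, hhead, sub_zero]
  simpa using (hasSum_nat_add_iff' K).2 Real.hasSum_one_div_factorial

lemma Real.mul_exp_one_sub_sum_lt (n : ℕ) :
    n * (Real.exp 1 - ∑ j ∈ range (n + 1), 1 / (j ! : ℝ)) < 1 / n ! := by
  have h := Real.exp_bound' zero_le_one le_rfl n.succ_pos
  simp only [one_pow, one_mul] at h
  have hfac : ((n + 1)! : ℝ) = (n + 1) * n ! := by push_cast [Nat.factorial_succ]; ring
  rw [hfac] at h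
  set t := Real.exp 1 - ∑ j ∈ range (n + 1), 1 / (j ! : ℝ)
  have hf : (0 : ℝ) < n ! := mod_cast n.factorial_pos
  have ht : t * ((n + 1) * n ! * (n + 1)) ≤ n + 1 + 1 := by
    rw [← le_div_iff₀ (by positivity)]; push_cast at h; linarith
  have hn : (0 : ℝ) ≤ n := n.cast_nonneg
  rw [lt_div_iff₀ hf]
  nlinarith [mul_le_mul_of_nonneg_left ht hn, sq_nonneg ((n : ℝ) + 1)]

lemma pS1_lt_one {K : ℕ} (hK : 1 ≤ K) : pS1 K < 1 := by
  obtain ⟨n, rfl⟩ := Nat.exists_eq_add_of_le' hK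
  have htail := Real.mul_exp_one_sub_sum_lt n
  rw [sum_range_succ] at htail
  rw [pS1, (Real.hasSum_one_div_factorial_tail _).tsum_eq, Nat.add_sub_cancel, sum_range_succ,
    Real.exp_neg, ← div_eq_inv_mul, div_mul_eq_mul_div, ← add_div, div_lt_one (Real.exp_pos 1)]
  push_cast at htail ⊢
  nlinarith

lemma Real.sum_pow_div_exp_mul_factorial_le_one {x : ℝ} (hx : 0 ≤ x) (n : ℕ) :
    ∑ m ∈ range n, x ^ m / (Real.exp x * m !) ≤ 1 := by
  simp_rw [mul_comm (Real.exp x), ← div_div, ← sum_div]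
  exact (div_le_one (Real.exp_pos x)).2 (Real.sum_le_exp_of_nonneg hx n)

lemma pRanked_lt_one (L : ℕ) {i : ℕ} (hi : 1 ≤ i) : pRanked L i < 1 := by
  rcases L.eq_zero_or_pos with rfl | hL
  · simp [pRanked]
  have hx : (0 : ℝ) ≤ i - 1 := sub_nonneg.2 (mod_cast hi)
  have hw : ∀ m : ℕ, 0 ≤ ((i : ℝ) - 1) ^ m / (Real.exp ((i : ℝ) - 1) * m !) :=
    fun m => by positivity
  calc pRanked L i < ∑ m ∈ range L, ((i : ℝ) - 1) ^ m / (Real.exp ((i : ℝ) - 1) * m !) :=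
        sum_lt_sum (fun m hm => mul_le_of_le_one_right (hw m) (pS1_lt_one (by grind)).le)
          ⟨0, mem_range.2 hL, mul_lt_of_lt_one_right (by simp [Real.exp_pos])
            (pS1_lt_one (by omega))⟩
    _ ≤ 1 := Real.sum_pow_div_exp_mul_factorial_le_one hx L

lemma summable_pRanked_succ (L : ℕ) : Summable fun i : ℕ => pRanked L (i + 1) := by
  refine (summable_sum fun m _ =>
    (Real.summable_pow_mul_exp_neg_nat_mul m one_pos).mul_left (pS1 (L - m) / m !)).congr
    fun i => sum_congr rfl fun m _ => ?_
  push_cast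
  rw [add_sub_cancel_right, neg_one_mul, Real.exp_neg]
  field_simp

lemma Real.summable_log_one_sub_of_summable {ι : Type*} {a : ι → ℝ} (ha : Summable a) :
    Summable fun i => Real.log (1 - a i) := by
  simpa [sub_eq_add_neg] using Real.summable_log_one_add_of_summable ha.neg

theorem stmt11_general (L : ℕ) :
    (∀ i : ℕ, 1 ≤ i → pRanked L i < 1) ∧
    Tendsto (fun i : ℕ => pRanked L i) atTop (nhds 0) ∧
    Summable (fun i : ℕ => pRanked L (i + 1)) ∧
    Multipliable (fun i : ℕ => 1 - pRanked L (i + 1)) ∧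
    0 < ∏' i : ℕ, (1 - pRanked L (i + 1)) := by
  have hsum := summable_pRanked_succ L
  have hpos : ∀ i : ℕ, 0 < 1 - pRanked L (i + 1) :=
    fun i => sub_pos.2 (pRanked_lt_one L i.succ_pos)
  have hlog := Real.summable_log_one_sub_of_summable hsum
  refine ⟨fun i hi => pRanked_lt_one L hi, (tendsto_add_atTop_iff_nat 1).1 hsum.tendsto_atTop_zero,
    hsum, Real.multipliable_of_summable_log hpos hlog, ?_⟩
  rw [← Real.rexp_tsum_eq_tprod hpos hlog]
  exact Real.exp_pos _

/-- For every `L ≥ 1`: `p_i(L) < 1` for every `i ≥ 1`, `p_i(L) → 0` as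
`i → ∞`, `Σ_{i=1}^{∞} p_i(L) < ∞`, and the infinite product `∏_{i=1}^{∞} (1 − p_i(L))`
converges to a strictly positive real number. -/
theorem stmt11 (L : ℕ) (hL : 1 ≤ L) :
    (∀ i : ℕ, 1 ≤ i → pRanked L i < 1) ∧
    Tendsto (fun i : ℕ => pRanked L i) atTop (nhds 0) ∧
    Summable (fun i : ℕ => pRanked L (i + 1)) ∧
    Multipliable (fun i : ℕ => 1 - pRanked L (i + 1)) ∧
    0 < ∏' i : ℕ, (1 - pRanked L (i + 1)) :=
  stmt11_general L
end
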